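/- (Alternative determinant expression, Lemma A.1 (det3).) Suppose ψ satisfies the contiguous relation (re2). Fix integers m, n, an integer N ≥ 1, and nonzero t, b₁, b₃ ∈ ℂ with q^{n+k−1}·b₃ ≠ 1 for k = 1, …, N−1. Then τ_N^{m,n}(t) = ∏_{k=1}^{N−1} (q^{n+k−1}·b₃/(q^{n+k−1}·b₃ − 1))^{N−k} · det(ψ(q^{j−1}·t, q^{m−i+1}·b₁, qⁿ·b₃))_{i,j=1,…,N}. -/

import Mathlib

/-!
Put `b₁' = qᵐb₁`, `b₃' = qⁿb₃` and let `f(a, k)` be the row vector `(ψ(qᵃt, q⁻ʲb₁', qᵏb₃'))ⱼ`.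
Solving (re2) for `ψ(·, ·, q b₃)` gives `f(a, k+1) = c_{k+1} f(a+1, k) + d_{k+1} f(a, k)`, where
`c_k = q^{n+k-1}b₃ / (q^{n+k-1}b₃ - 1)`. By induction on `i`, `f(0, i) - (c₁⋯cᵢ) f(i, 0)` lies in
the span of `f(0, 0), …, f(i-1, 0)`. So the matrix of τ_N, with rows `f(0, i)`, is a lower triangular
transform, with diagonal entries `c₁⋯cᵢ`, of the matrix with rows `f(i, 0)`, which is the transpose
of the matrix on the right. Collecting factors, `∏_{i<N} c₁⋯cᵢ = ∏_k c_k^{N-k}`.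
-/

/-- `τ_N(t,b₁,b₃) = det(ψ(t, q^{1-j} b₁, q^{i-1} b₃))_{i,j=1,…,N}`. -/
noncomputable def tau (q : ℂ) (ψ : ℂ → ℂ → ℂ → ℂ) (N : ℕ) (t b1 b3 : ℂ) : ℂ :=
  Matrix.det (Matrix.of fun i j : Fin N => ψ t (q ^ (-(j : ℤ)) * b1) (q ^ (i : ℤ) * b3))

open Finset Submodule Matrix

section Determinant

variable {R : Type*} [CommRing R]

theorem Matrix.det_updateRow_eq_zero_of_mem_span {n : Type*} [Fintype n] [DecidableEq n]
    (A : Matrix n n R) {i : n} {x : n → R} (hx : x ∈ span R (A '' {i}ᶜ)) :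
    (A.updateRow i x).det = 0 := by
  induction hx using Submodule.span_induction with
  | mem y hy =>
    obtain ⟨j, hj, rfl⟩ := hy
    exact det_updateRow_eq_zero hj
  | zero => exact det_eq_zero_of_row_eq_zero i (by simp)
  | add y z _ _ hy hz => rw [det_updateRow_add, hy, hz, add_zero]
  | smul c y _ hy => rw [det_updateRow_smul, hy, mul_zero]

theorem Matrix.det_of_eq_prod_mul_det_of_sub_smul_mem_span {n : ℕ} (v w : ℕ → Fin n → R)
    (C : ℕ → R) (h : ∀ i < n, v i - C i • w i ∈ span R (w '' Set.Iio i)) :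
    (of fun i : Fin n => v i).det = (∏ i ∈ range n, C i) * (of fun i : Fin n => w i).det := by
  let X : ℕ → Matrix (Fin n) (Fin n) R := fun k => of fun i => if (i : ℕ) < k then w i else v i
  have hX : ∀ k (hk : k < n), (X k).det = C k * (X (k + 1)).det := by
    intro k hk
    have hupd : X k = (X (k + 1)).updateRow ⟨k, hk⟩ (C k • w k + (v k - C k • w k)) := by
      ext i j
      by_cases hi : i = ⟨k, hk⟩
      · subst hi
        simp [X]
      · have hik : (i : ℕ) ≠ k := fun h => hi (Fin.ext h)
        simp [X, updateRow_ne hi, hik.le_iff_lt]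
    have hself : (X (k + 1)).updateRow ⟨k, hk⟩ (w k) = X (k + 1) := by
      ext i j
      by_cases hi : i = ⟨k, hk⟩
      · subst hi
        simp [X]
      · simp [updateRow_ne hi]
    have hspan : w '' Set.Iio k ⊆ X (k + 1) '' {⟨k, hk⟩}ᶜ := by
      rintro _ ⟨b, hb, rfl⟩
      refine ⟨⟨b, hb.trans hk⟩, by simpa [Fin.ext_iff] using hb.ne, ?_⟩
      ext j
      simp [X, (Set.mem_Iio.mp hb).le]
    rw [hupd, det_updateRow_add, det_updateRow_smul, hself,
      det_updateRow_eq_zero_of_mem_span _ (span_mono hspan (h k hk)), add_zero]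
  have hind : ∀ k ≤ n, (X 0).det = (∏ i ∈ range k, C i) * (X k).det := by
    intro k
    induction k with
    | zero => simp
    | succ k ih =>
      intro hk
      rw [ih (by omega), hX k hk, prod_range_succ, mul_assoc]
  convert hind n le_rfl using 3 <;> ext i j <;> simp [X]

end Determinant

section Recurrence

variable {R M : Type*} [CommRing R] [AddCommGroup M] [Module R M]

theorem sub_prod_smul_mem_span_of_recurrence {f : ℕ → ℕ → M} {c d : ℕ → R} {i : ℕ}
    (hf : ∀ a, ∀ k < i, f a (k + 1) = c (k + 1) • f (a + 1) k + d (k + 1) • f a k) (a : ℕ) :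
    f a i - (∏ k ∈ Icc 1 i, c k) • f (a + i) 0 ∈
      span R ((fun b => f (a + b) 0) '' Set.Iio i) := by
  induction i generalizing a with
  | zero => simp
  | succ i ih =>
    replace ih := ih fun a k hk => hf a k (Nat.lt_succ_of_lt hk)
    obtain ⟨P, hP⟩ : ∃ P, ∏ k ∈ Icc 1 i, c k = P := ⟨_, rfl⟩
    rw [hP] at ih
    set S := span R ((fun b => f (a + b) 0) '' Set.Iio (i + 1))
    have hshift : f (a + 1) i - P • f (a + 1 + i) 0 ∈ S := by
      refine span_mono ?_ (ih (a + 1))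
      rintro _ ⟨b, hb, rfl⟩
      exact ⟨b + 1, Nat.succ_lt_succ hb, by simp only [add_right_comm a 1 b, add_assoc]⟩
    have hprev : f a i ∈ S := by
      have h1 : f a i - P • f (a + i) 0 ∈ S :=
        span_mono (Set.image_mono (Set.Iio_subset_Iio i.le_succ)) (ih a)
      have h2 : f (a + i) 0 ∈ S := subset_span ⟨i, i.lt_succ_self, rfl⟩
      simpa using S.add_mem h1 (S.smul_mem P h2)
    have hstep : f a (i + 1) - (∏ k ∈ Icc 1 (i + 1), c k) • f (a + (i + 1)) 0 =
        c (i + 1) • (f (a + 1) i - P • f (a + 1 + i) 0) + d (i + 1) • f a i := by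
      rw [hf a i i.lt_succ_self, prod_Icc_succ_top (Nat.le_add_left 1 i), ← add_assoc,
        add_right_comm a i 1, ← hP]
      module
    rw [hstep]
    exact S.add_mem (S.smul_mem _ hshift) (S.smul_mem _ hprev)

end Recurrence

theorem prod_range_prod_Icc_eq_prod_pow {M : Type*} [CommMonoid M] (g : ℕ → M) (N : ℕ) :
    ∏ i ∈ range N, ∏ k ∈ Icc 1 i, g k = ∏ k ∈ Icc 1 (N - 1), g k ^ (N - k) := by
  rw [prod_comm' (t' := Icc 1 (N - 1)) (s' := fun k => Ico k N)]
  · refine prod_congr rfl fun k _ => ?_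
    rw [prod_const, Nat.card_Ico]
  · intro i k
    simp only [mem_range, mem_Icc, mem_Ico]
    omega

def ContiguousRe2 (q : ℂ) (ψ : ℂ → ℂ → ℂ → ℂ) : Prop :=
  ∀ t b1 b3 : ℂ, t ≠ 0 → b1 ≠ 0 → b3 ≠ 0 →
    b3 * ψ (q * t) b1 b3 = ψ t b1 b3 + (b3 - 1) * ψ t b1 (q * b3)

noncomputable def psiRow (q : ℂ) (ψ : ℂ → ℂ → ℂ → ℂ) (N : ℕ) (t b1 b3 : ℂ) (a k : ℕ) :
    Fin N → ℂ :=
  fun j => ψ (q ^ a * t) (q ^ (-(j : ℤ)) * b1) (q ^ k * b3)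

theorem tau_eq_det_psiRow (q : ℂ) (ψ : ℂ → ℂ → ℂ → ℂ) (N : ℕ) (t b1 b3 : ℂ) :
    tau q ψ N t b1 b3 = (of fun i : Fin N => psiRow q ψ N t b1 b3 0 i).det := by
  unfold tau
  congr 1
  ext i j
  simp only [of_apply, psiRow, pow_zero, one_mul, zpow_natCast]

theorem det_zpow_eq_det_psiRow {q : ℂ} (hq : q ≠ 0) (ψ : ℂ → ℂ → ℂ → ℂ) (N : ℕ) (m : ℤ)
    (t b1 b3 : ℂ) :
    (of fun i j : Fin N => ψ (q ^ (j : ℤ) * t) (q ^ (m - (i : ℤ)) * b1) b3).det =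
      (of fun i : Fin N => psiRow q ψ N t (q ^ m * b1) b3 i 0).det := by
  rw [← det_transpose]
  congr 1
  ext i j
  simp only [transpose_apply, of_apply, psiRow, pow_zero, one_mul, zpow_natCast]
  rw [← mul_assoc, ← zpow_add₀ hq, neg_add_eq_sub]

section Contiguous

variable {q : ℂ} {ψ : ℂ → ℂ → ℂ → ℂ}

theorem ContiguousRe2.apply_mul_eq (hre2 : ContiguousRe2 q ψ) {t b1 b3 : ℂ} (ht : t ≠ 0)
    (hb1 : b1 ≠ 0) (hb3 : b3 ≠ 0) (hb3_one : b3 ≠ 1) :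
    ψ t b1 (q * b3) = b3 / (b3 - 1) * ψ (q * t) b1 b3 + -1 / (b3 - 1) * ψ t b1 b3 := by
  have h := hre2 t b1 b3 ht hb1 hb3
  field_simp [sub_ne_zero.mpr hb3_one]
  linear_combination -h

theorem ContiguousRe2.psiRow_succ_right (hre2 : ContiguousRe2 q ψ) (hq : q ≠ 0) {N : ℕ}
    {t b1 b3 : ℂ} (ht : t ≠ 0) (hb1 : b1 ≠ 0) (hb3 : b3 ≠ 0) (a k : ℕ) (hk : q ^ k * b3 ≠ 1) :
    psiRow q ψ N t b1 b3 a (k + 1) =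
      (q ^ k * b3 / (q ^ k * b3 - 1)) • psiRow q ψ N t b1 b3 (a + 1) k +
        (-1 / (q ^ k * b3 - 1)) • psiRow q ψ N t b1 b3 a k := by
  ext j
  have h := hre2.apply_mul_eq (by positivity : q ^ a * t ≠ 0)
    (by positivity : q ^ (-(j : ℤ)) * b1 ≠ 0) (by positivity : q ^ k * b3 ≠ 0) hk
  have hb : q ^ (k + 1) * b3 = q * (q ^ k * b3) := by ring
  have ht' : q ^ (a + 1) * t = q * (q ^ a * t) := by ring
  simpa only [psiRow, Pi.add_apply, Pi.smul_apply, smul_eq_mul, hb, ht'] using h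

end Contiguous

theorem alt_det_expression_det3_general (q : ℂ) (hq : q ≠ 0) (ψ : ℂ → ℂ → ℂ → ℂ)
    (hre2 : ∀ t b1 b3 : ℂ, t ≠ 0 → b1 ≠ 0 → b3 ≠ 0 →
      b3 * ψ (q * t) b1 b3 = ψ t b1 b3 + (b3 - 1) * ψ t b1 (q * b3))
    (m n : ℤ) (N : ℕ)
    (t b1 b3 : ℂ) (ht : t ≠ 0) (hb1 : b1 ≠ 0) (hb3 : b3 ≠ 0)
    (hgen : ∀ k : ℕ, 1 ≤ k → k ≤ N - 1 → q ^ (n + (k : ℤ) - 1) * b3 ≠ 1) :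
    tau q ψ N t (q ^ m * b1) (q ^ n * b3) =
      (∏ k ∈ Finset.Icc 1 (N - 1),
          (q ^ (n + (k : ℤ) - 1) * b3 / (q ^ (n + (k : ℤ) - 1) * b3 - 1)) ^ (N - k)) *
        Matrix.det (Matrix.of fun i j : Fin N =>
          ψ (q ^ (j : ℤ) * t) (q ^ (m - (i : ℤ)) * b1) (q ^ n * b3)) := by
  set c : ℕ → ℂ := fun k => q ^ (n + (k : ℤ) - 1) * b3 / (q ^ (n + (k : ℤ) - 1) * b3 - 1)
  set d : ℕ → ℂ := fun k => -1 / (q ^ (n + (k : ℤ) - 1) * b3 - 1)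
  set f := psiRow q ψ N t (q ^ m * b1) (q ^ n * b3)
  have hshift : ∀ k : ℕ, q ^ k * (q ^ n * b3) = q ^ (n + ((k + 1 : ℕ) : ℤ) - 1) * b3 := by
    intro k
    rw [← mul_assoc, ← zpow_natCast, ← zpow_add₀ hq]
    push_cast
    ring_nf
  have hrec : ∀ a k, k + 1 < N → f a (k + 1) = c (k + 1) • f (a + 1) k + d (k + 1) • f a k := by
    intro a k hk
    have hk1 := hgen (k + 1) (by omega) (by omega)
    simp only [c, d, ← hshift] at hk1 ⊢
    exact ContiguousRe2.psiRow_succ_right hre2 hq ht (by positivity) (by positivity) a k hk1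
  rw [tau_eq_det_psiRow, det_zpow_eq_det_psiRow hq, ← prod_range_prod_Icc_eq_prod_pow]
  refine det_of_eq_prod_mul_det_of_sub_smul_mem_span (f 0) (f · 0) (fun i => ∏ k ∈ Icc 1 i, c k)
    fun i hi => ?_
  simpa only [zero_add] using
    sub_prod_smul_mem_span_of_recurrence (c := c) (d := d) (fun a k hk => hrec a k (by omega)) 0

theorem alt_det_expression_det3 (q : ℂ) (hq : q ≠ 0) (ψ : ℂ → ℂ → ℂ → ℂ)
    (hre2 : ∀ t b1 b3 : ℂ, t ≠ 0 → b1 ≠ 0 → b3 ≠ 0 →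
      b3 * ψ (q * t) b1 b3 = ψ t b1 b3 + (b3 - 1) * ψ t b1 (q * b3))
    (m n : ℤ) (N : ℕ) (hN : 1 ≤ N)
    (t b1 b3 : ℂ) (ht : t ≠ 0) (hb1 : b1 ≠ 0) (hb3 : b3 ≠ 0)
    (hgen : ∀ k : ℕ, 1 ≤ k → k ≤ N - 1 → q ^ (n + (k : ℤ) - 1) * b3 ≠ 1) :
    tau q ψ N t (q ^ m * b1) (q ^ n * b3) =
      (∏ k ∈ Finset.Icc 1 (N - 1),
          (q ^ (n + (k : ℤ) - 1) * b3 / (q ^ (n + (k : ℤ) - 1) * b3 - 1)) ^ (N - k)) *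
        Matrix.det (Matrix.of fun i j : Fin N =>
          ψ (q ^ (j : ℤ) * t) (q ^ (m - (i : ℤ)) * b1) (q ^ n * b3)) :=
  alt_det_expression_det3_general q hq ψ hre2 m n N t b1 b3 ht hb1 hb3 hgen
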